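/- Let a = α∨ + rc and b = β∨ + lc be affine roots (α, β ∈ R₀, r, l ∈ ℤ) with ⟨α,β∨⟩ = 0. Then the integral-reflection operators commute: I_a ∘ I_b = I_b ∘ I_a as operators on functions P → ℂ. -/

import Mathlib

open scoped RealInnerProductSpace BigOperators Classical

noncomputable section

/-- Alternating composition `A ∘ B ∘ A ∘ ⋯` with `m` factors (starting with `A`). -/
def altComp {α : Type*} (A B : α → α) : ℕ → (α → α)
  | 0 => id
  | m + 1 => A ∘ altComp B A m

/-- The sign of a real number, as an integer (with `sgnZ 0 = 0`). -/
def sgnZ (x : ℝ) : ℤ := if 0 < x then 1 else if x < 0 then -1 else 0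

/-- The function `v(x) = (1-t²)∫₀ˣ dy/(1-2t cos y+t²)`. -/
def mvfun (t x : ℝ) : ℝ :=
  (1 - t ^ 2) * ∫ y in (0:ℝ)..x, 1 / (1 - 2 * t * Real.cos y + t ^ 2)

section AffineOps

variable {V : Type*} [NormedAddCommGroup V] [InnerProductSpace ℝ V]

/-- The coroot `α∨ = 2α/⟨α,α⟩`. -/
def coroot (α : V) : V := (2 / ⟪α, α⟫) • α

/-- The affine root `a = α∨ + r c` (encoded as the pair `(α, r)`), as an affine
function on `V`. -/
def aval (c : ℝ) (a : V × ℤ) (x : V) : ℝ := ⟪x, coroot a.1⟫ + a.2 * c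

/-- The affine reflection `s_a(x) = x - a(x) α` attached to `a = α∨ + r c`. -/
def sAff (c : ℝ) (a : V × ℤ) (x : V) : V := x - aval c a x • a.1

/-- `w` maps the affine root `a` to the affine root `b`, i.e. `(wa)(x) = a(w⁻¹x) = b(x)`. -/
def mapsRoot (c : ℝ) (w : Equiv.Perm V) (a b : V × ℤ) : Prop :=
  ∀ x : V, aval c a (w⁻¹ x) = aval c b x

/-- The linear part `w′` of an affine transformation `w`. -/
def linPart (w : Equiv.Perm V) (x : V) : V := w x - w 0

variable {R : Type*} [Field R]

/-- The difference-reflection operator `T̂_a`. -/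
def hatT (c : ℝ) (τ : V × ℤ → R) (a : V × ℤ) (f : V → R) (x : V) : R :=
  if 0 < aval c a x then τ a * f (sAff c a x)
  else if aval c a x = 0 then τ a * f x
  else (τ a)⁻¹ * f (sAff c a x) + (τ a - (τ a)⁻¹) * f x

/-- The discrete integral operator `J_a`. -/
def Jop (c : ℝ) (a : V × ℤ) (f : V → R) (x : V) : R :=
  if 0 < aval c a x then
    - ∑ k ∈ Finset.Icc (1 : ℤ) ⌊aval c a x⌋, f (x - k • a.1)
  else if aval c a x = 0 then 0
  else ∑ k ∈ Finset.Ico (0 : ℤ) (-⌊aval c a x⌋), f (x + k • a.1)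

/-- The integral-reflection operator `I_a = τ_a s_a + (τ_a - τ_a⁻¹) J_a`. -/
def Iop (c : ℝ) (τ : V × ℤ → R) (a : V × ℤ) (f : V → R) (x : V) : R :=
  τ a * f (sAff c a x) + (τ a - (τ a)⁻¹) * Jop c a f x

end AffineOps

/-- An irreducible reduced crystallographic root system spanning `V`, together with a
choice of positive roots, simple roots, and the highest short root. -/
structure RootSystemData (V : Type*) [NormedAddCommGroup V] [InnerProductSpace ℝ V] :
    Type _ where
  n : ℕ
  n_pos : 1 ≤ n
  rank_eq : Module.finrank ℝ V = n
  R0 : Finset V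
  ne_zero : ∀ α ∈ R0, α ≠ (0 : V)
  span_top : Submodule.span ℝ (R0 : Set V) = ⊤
  reduced : ∀ α ∈ R0, ∀ t : ℝ, t • α ∈ R0 → t = 1 ∨ t = -1
  crystallographic : ∀ α ∈ R0, ∀ β ∈ R0, ∃ k : ℤ, ⟪β, coroot α⟫ = (k : ℝ)
  reflect_mem : ∀ α ∈ R0, ∀ β ∈ R0, β - ⟪β, coroot α⟫ • α ∈ R0
  irreducible : ∀ S : Finset V, S ⊆ R0 →
      (∀ a ∈ S, ∀ b ∈ R0, b ∉ S → ⟪a, b⟫ = 0) → S = ∅ ∨ S = R0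
  pos : Finset V
  pos_subset : pos ⊆ R0
  pos_or_neg : ∀ α ∈ R0, α ∈ pos ∨ -α ∈ pos
  pos_not_both : ∀ α ∈ pos, -α ∉ pos
  pos_add : ∀ α ∈ pos, ∀ β ∈ pos, α + β ∈ R0 → α + β ∈ pos
  simpleRoot : Fin n → V
  simpleRoot_mem : ∀ j, simpleRoot j ∈ pos
  pos_natCombo : ∀ α ∈ pos, ∃ k : Fin n → ℕ, α = ∑ j, (k j : ℝ) • simpleRoot j
  hshort : V
  hshort_mem : hshort ∈ pos
  hshort_short : ∀ α ∈ R0, ‖hshort‖ ≤ ‖α‖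
  hshort_highest : ∀ α ∈ R0, ‖α‖ = ‖hshort‖ →
      ∃ k : Fin n → ℕ, hshort - α = ∑ j, (k j : ℝ) • simpleRoot j

namespace RootSystemData

variable {V : Type*} [NormedAddCommGroup V] [InnerProductSpace ℝ V]
variable (D : RootSystemData V)

/-- The weight lattice `P`. -/
def weightLattice : Set V :=
  {x : V | ∀ α ∈ D.R0, ∃ k : ℤ, ⟪x, coroot α⟫ = (k : ℝ)}

/-- The root lattice `Q`. -/
def rootLattice : Set V := (Submodule.span ℤ (D.R0 : Set V) : Set V)

/-- The coweight lattice `P∨`. -/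
def coweightLattice : Set V :=
  {x : V | ∀ α ∈ D.R0, ∃ k : ℤ, ⟪x, α⟫ = (k : ℝ)}

/-- The dominant cone. -/
def dominant : Set V := {x : V | ∀ α ∈ D.pos, 0 ≤ ⟪x, coroot α⟫}

/-- `ω` is a minuscule (dominant) weight. -/
def IsMinuscule (ω : V) : Prop :=
  ω ∈ D.weightLattice ∧ ω ∈ D.dominant ∧ ω ≠ 0 ∧
    ∀ α ∈ D.pos, ⟪ω, coroot α⟫ ≤ 1

/-- `ω` is the quasi-minuscule weight, i.e. the highest short root. -/
def IsQuasiMinuscule (ω : V) : Prop := ω = D.hshort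

/-- The saturated set `P_ϑ` containing the (quasi-)minuscule weights. -/
def Ptheta : Set V :=
  {ν : V | ν ∈ D.weightLattice ∧ ∀ α ∈ D.R0, α ≠ ν → |⟪ν, coroot α⟫| ≤ 1}

/-- Half sum of the positive roots. -/
def rhoHalf : V := (2⁻¹ : ℝ) • ∑ α ∈ D.pos, α

/-- Half sum of the positive coroots. -/
def rhoVee : V := (2⁻¹ : ℝ) • ∑ α ∈ D.pos, coroot α

/-- `(α, r)` encodes an affine root. -/
def IsAffRoot (a : V × ℤ) : Prop := a.1 ∈ D.R0

/-- `(α, r)` encodes a positive affine root. -/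
def IsAffPos (a : V × ℤ) : Prop :=
  a.1 ∈ D.R0 ∧ (1 ≤ a.2 ∨ (a.2 = 0 ∧ a.1 ∈ D.pos))

/-- `(α, r)` encodes a negative affine root. -/
def IsAffNeg (a : V × ℤ) : Prop := D.IsAffPos (-a.1, -a.2)

/-- The simple affine roots `a₀ = -ϑ∨ + c`, `a_j = α_j∨`. -/
def aSimple (j : Fin (D.n + 1)) : V × ℤ :=
  Fin.cons (α := fun _ => V × ℤ) (-D.hshort, (1 : ℤ))
    (fun i => (D.simpleRoot i, (0 : ℤ))) j

/-- The reflections generating the finite Weyl group `W₀`. -/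
def W0Gens : Set (Equiv.Perm V) :=
  {e | ∃ α ∈ D.R0, ∀ x, e x = x - ⟪x, coroot α⟫ • α}

/-- The finite Weyl group `W₀`. -/
def W0 : Subgroup (Equiv.Perm V) := Subgroup.closure D.W0Gens

variable (c : ℝ)

/-- The affine reflections generating the affine Weyl group `W_R`. -/
def AffGens : Set (Equiv.Perm V) :=
  {e | ∃ a : V × ℤ, D.IsAffRoot a ∧ ∀ x, e x = sAff c a x}

/-- The affine Weyl group `W_R`. -/
def WR : Subgroup (Equiv.Perm V) := Subgroup.closure (D.AffGens c)

/-- The translations `t_{cλ}`, `λ ∈ P`. -/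
def TransGens : Set (Equiv.Perm V) :=
  {e | ∃ lam ∈ D.weightLattice, ∀ x : V, e x = x + c • lam}

/-- The extended affine Weyl group `W = W₀ ⋉ t(cP)`. -/
def Wext : Subgroup (Equiv.Perm V) :=
  Subgroup.closure (D.AffGens c ∪ D.TransGens c)

/-- The set `R(w) = R⁺ ∩ w⁻¹(R⁻)`. -/
def RW (w : Equiv.Perm V) : Set (V × ℤ) :=
  {a | D.IsAffPos a ∧ ∃ b : V × ℤ, D.IsAffNeg b ∧ mapsRoot c w a b}

/-- The length `ℓ(w) = #R(w)`. -/
def len (w : Equiv.Perm V) : ℕ := (D.RW c w).ncard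

/-- The closed fundamental alcove `A_c`. -/
def alcove : Set V := {x | ∀ a : V × ℤ, D.IsAffPos a → 0 ≤ aval c a x}

/-- `wmin x` is the unique shortest element of the affine Weyl group mapping `x` into
the fundamental alcove. -/
def IsWmin (wmin : V → Equiv.Perm V) : Prop :=
  ∀ x : V, wmin x ∈ D.WR c ∧ (wmin x) x ∈ D.alcove c ∧
    ∀ w ∈ D.WR c, w x ∈ D.alcove c → D.len c (wmin x) < D.len c w ∨ w = wmin x

/-- One step in the Bruhat order: `w < w s_a` whenever `ℓ(w) < ℓ(w s_a)`. -/
def bruhatStep (w w' : Equiv.Perm V) : Prop :=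
  ∃ a : V × ℤ, D.IsAffPos a ∧ ∃ e : Equiv.Perm V,
    (∀ x, e x = sAff c a x) ∧ w' = w * e ∧ D.len c w < D.len c w'

/-- The Bruhat order on the affine Weyl group. -/
def bruhatLE (w w' : Equiv.Perm V) : Prop :=
  Relation.ReflTransGen (D.bruhatStep c) w w'

/-- The partial order on `V`: `x ≤ y` iff `x₊ = y₊` and `w_x ≤ w_y` (Bruhat). -/
def vle (wmin : V → Equiv.Perm V) (x y : V) : Prop :=
  (wmin x) x = (wmin y) y ∧ D.bruhatLE c (wmin x) (wmin y)

/-- The interval `[x, y]` for the order `vle`. -/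
def vInterval (wmin : V → Equiv.Perm V) (x y : V) : Set V :=
  {z : V | D.vle c wmin x z ∧ D.vle c wmin z y}

/-- The partial order `⪯` on the weight lattice:
`μ ⪯ λ` iff `λ - μ ∈ Q` and `Conv [μ₊, μ] ⊆ Conv [λ₊, λ]`. -/
def pleq (wmin : V → Equiv.Perm V) (μ lam : V) : Prop :=
  lam - μ ∈ D.rootLattice ∧
    convexHull ℝ (D.vInterval c wmin ((wmin μ) μ) μ)
      ⊆ convexHull ℝ (D.vInterval c wmin ((wmin lam) lam) lam)

section Ops

variable {R : Type*} [Field R]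

/-- `τ` is a multiplicity function: nonvanishing on affine roots, and invariant
under the (extended affine) Weyl group action on the affine roots. -/
def IsMultiplicity (τ : V × ℤ → R) : Prop :=
  (∀ a : V × ℤ, D.IsAffRoot a → τ a ≠ 0) ∧
    ∀ w ∈ D.Wext c, ∀ a b : V × ℤ, D.IsAffRoot a → D.IsAffRoot b →
      mapsRoot c w a b → τ a = τ b

/-- `τ_w = ∏_{a ∈ R(w)} τ_a`. -/
def tauw (τ : V × ℤ → R) (w : Equiv.Perm V) : R := ∏ᶠ a ∈ D.RW c w, τ a

/-- `τ₀`, the multiplicity of the affine simple root `a₀`. -/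
def tauZero (τ : V × ℤ → R) : R := τ (-D.hshort, (1 : ℤ))

/-- The operator `I_{j₁} ∘ ⋯ ∘ I_{jℓ}` attached to a word in the simple reflections. -/
def wordOp (τ : V × ℤ → R) (l : List (Fin (D.n + 1))) : (V → R) → V → R :=
  (l.map fun j => Iop c τ (D.aSimple j)).foldr (· ∘ ·) id

/-- `l` is a reduced word for `w`, i.e. `w = s_{j₁} ∘ ⋯ ∘ s_{jℓ}` with `ℓ = ℓ(w)`. -/
def IsReducedWord (w : Equiv.Perm V) (l : List (Fin (D.n + 1))) : Prop :=
  l.length = D.len c w ∧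
    ∀ x : V, w x = ((l.map fun j => sAff c (D.aSimple j)).foldr (· ∘ ·) id) x

/-- `e∨_τ(η) = ∏_{α ∈ R₀⁺} τ_{α∨}^{⟨η,α∨⟩}`. -/
def etau (τ : V × ℤ → R) (η : V) : R :=
  ∏ α ∈ D.pos, τ (α, (0 : ℤ)) ^ ⌊⟪η, coroot α⟫⌋

/-- `h∨_τ = τ₀² e∨_τ(ϑ)`. -/
def hvee (τ : V × ℤ → R) : R := D.tauZero τ ^ 2 * D.etau τ D.hshort

/-- `θ(μ) = #{b ∈ R(w_μ) : b(μ) = -2}`. -/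
def theta (wmin : V → Equiv.Perm V) (μ : V) : ℕ :=
  {b : V × ℤ | b ∈ D.RW c (wmin μ) ∧ aval c b μ = -2}.ncard

/-- The coefficient `c_{λ,η} = θ(λ-η) e∨_τ(η) (h∨_τ)^{-sign⟨λ,η∨⟩}`. -/
def ccoef (τ : V × ℤ → R) (wmin : V → Equiv.Perm V) (lam η : V) : R :=
  (D.theta c wmin (lam - η) : R) * D.etau τ η *
    D.hvee τ ^ (-sgnZ ⟪lam, coroot η⟫)

/-- The coefficient `a_{λ,ν} = τ_{w_{w_λ(λ-ν)}} τ_{w_{w_λ(λ-ν)} w_λ} τ_{w_λ}⁻¹`. -/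
def acoef (τ : V × ℤ → R) (wmin : V → Equiv.Perm V) (lam ν : V) : R :=
  D.tauw c τ (wmin ((wmin lam) (lam - ν))) *
    D.tauw c τ (wmin ((wmin lam) (lam - ν)) * wmin lam) *
    (D.tauw c τ (wmin lam))⁻¹

/-- The coefficient `b_{λ,ν}`. -/
def bcoef (τ : V × ℤ → R) (wmin : V → Equiv.Perm V) (lam ν : V) : R :=
  if (wmin (lam - ν)) (lam - ν) = (wmin lam) lam then
    D.tauw c τ (wmin ((wmin lam) (lam - ν))) ^ 2 *
      (if D.IsAffNeg (ν, ⌊(1 - ⟪lam, coroot ν⟫) / c⌋) then 1 else 0)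
  else D.ccoef c τ wmin ((wmin lam) lam) (linPart (wmin lam) ν)

/-- The intertwining operator `(𝒥f)(λ) = τ_{w_λ}⁻¹ (I_{w_λ} f)(λ₊)`, where `Iw` assigns
to each `w_λ` the composite of integral-reflection operators along a reduced word. -/
def Jcal (τ : V × ℤ → R) (wmin : V → Equiv.Perm V)
    (Iw : Equiv.Perm V → (V → R) → V → R) (f : V → R) (x : V) : R :=
  (D.tauw c τ (wmin x))⁻¹ * Iw (wmin x) f ((wmin x) x)

end Ops

/-- The Yang–Yang type Morse function `𝒱_μ`. -/
def morse (t : V → ℝ) (μ ξ : V) : ℝ :=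
  (c / 2) * ⟪ξ, ξ⟫ - 2 * Real.pi * ⟪D.rhoVee + μ, ξ⟫ +
    ∑ α ∈ D.pos, (2 / ⟪α, α⟫) * ∫ x in (0:ℝ)..(⟪ξ, α⟫), mvfun (t α) x

/-- The critical equation `cξ + ∑_{α>0} v_α(⟨ξ,α⟩) α∨ = 2π(ρ∨+μ)`. -/
def criticalEq (t : V → ℝ) (μ ξ : V) : Prop :=
  c • ξ + ∑ α ∈ D.pos, mvfun (t α) ⟪ξ, α⟫ • coroot α
    = (2 * Real.pi) • (D.rhoVee + μ)

/-- The Hessian bilinear form `H_{η,ζ}(ξ)`. -/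
def hessForm (t : V → ℝ) (ξ η ζ : V) : ℝ :=
  c * ⟪η, ζ⟫ + ∑ α ∈ D.R0,
    (1 - t α ^ 2) * ⟪η, α⟫ * ⟪ζ, α⟫ /
      (⟪α, α⟫ * (1 - 2 * t α * Real.cos ⟪ξ, α⟫ + t α ^ 2))

/-- `κ_± = (2/n) ∑_{α>0} (1-t_α²)/(1 ± |t_α|)²`; here `s = ±1`. -/
def kappaPM (t : V → ℝ) (s : ℝ) : ℝ :=
  (2 / (D.n : ℝ)) * ∑ α ∈ D.pos, (1 - t α ^ 2) / (1 + s * |t α|) ^ 2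

end RootSystemData

/-!
If `⟪α, β⟫ = 0`, then the affine function `a` is invariant under translation by multiples of `β`,
so `s_a` commutes with both `s_b` and those translations. Both `J_a f (x)` and `J_b f (x)` are then
weighted sums of `f` over the lines `x + ℤα` and `x + ℤβ`, with weights depending only on `a(x)` and
`b(x)`, so `J_a J_b` and `J_b J_a` are the same double sum over `x + ℤα + ℤβ`. Expanding
`I_a I_b` and `I_b I_a` then gives the same four terms.
-/

section PerpendicularAffineRoots

variable {V : Type*} [NormedAddCommGroup V] [InnerProductSpace ℝ V]
variable {R : Type*} [Field R] (c : ℝ)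

lemma inner_coroot_eq_zero_iff {x α : V} : ⟪x, coroot α⟫ = 0 ↔ ⟪x, α⟫ = 0 := by
  by_cases hα : α = 0 <;> simp [coroot, real_inner_smul_right, hα]

lemma aval_add_of_inner_eq_zero {a : V × ℤ} {v : V} (hv : ⟪v, a.1⟫ = 0) (x : V) :
    aval c a (x + v) = aval c a x := by
  simp [aval, inner_add_left, inner_coroot_eq_zero_iff.2 hv]

lemma sAff_add_of_inner_eq_zero {a : V × ℤ} {v : V} (hv : ⟪v, a.1⟫ = 0) (x : V) :
    sAff c a (x + v) = sAff c a x + v := by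
  rw [sAff, sAff, aval_add_of_inner_eq_zero c hv, add_sub_right_comm]

lemma sAff_eq_add_smul (a : V × ℤ) (x : V) : sAff c a x = x + (-aval c a x) • a.1 := by
  rw [sAff, neg_smul, sub_eq_add_neg]

def jSum (t : ℝ) (g : ℤ → R) : R :=
  if 0 < t then - ∑ k ∈ Finset.Icc (1 : ℤ) ⌊t⌋, g (-k)
  else if t = 0 then 0
  else ∑ k ∈ Finset.Ico (0 : ℤ) (-⌊t⌋), g k

lemma jSum_comm (s t : ℝ) (g : ℤ → ℤ → R) :
    jSum s (fun j => jSum t (g j)) = jSum t (fun k => jSum s (fun j => g j k)) := by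
  unfold jSum
  split_ifs <;> simp only [Finset.sum_neg_distrib, neg_neg, Finset.sum_const_zero, neg_zero] <;>
    rw [Finset.sum_comm]

lemma Jop_eq_jSum (a : V × ℤ) (f : V → R) (x : V) :
    Jop c a f x = jSum (aval c a x) fun k => f (x + k • a.1) := by
  simp only [Jop, jSum, neg_zsmul, ← sub_eq_add_neg]

lemma Jop_add_mul (a : V × ℤ) (p q : R) (f g : V → R) (x : V) :
    Jop c a (fun y => p * f y + q * g y) x = p * Jop c a f x + q * Jop c a g x := by
  simp only [Jop_eq_jSum, jSum]
  split_ifs <;>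
    simp only [Finset.sum_add_distrib, Finset.mul_sum, mul_neg, mul_zero, add_zero, neg_add]

variable {a b : V × ℤ}

lemma inner_smul_fst_eq_zero (h : ⟪a.1, b.1⟫ = 0) (t : ℝ) : ⟪t • b.1, a.1⟫ = 0 := by
  rw [real_inner_smul_left, real_inner_comm, h, mul_zero]

lemma inner_zsmul_fst_eq_zero (h : ⟪a.1, b.1⟫ = 0) (k : ℤ) : ⟪k • b.1, a.1⟫ = 0 := by
  rw [← Int.cast_smul_eq_zsmul ℝ]
  exact inner_smul_fst_eq_zero h k

lemma aval_sAff_of_inner_eq_zero (h : ⟪a.1, b.1⟫ = 0) (x : V) :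
    aval c a (sAff c b x) = aval c a x := by
  rw [sAff_eq_add_smul, aval_add_of_inner_eq_zero c (inner_smul_fst_eq_zero h _)]

lemma sAff_comm_of_inner_eq_zero (h : ⟪a.1, b.1⟫ = 0) (x : V) :
    sAff c a (sAff c b x) = sAff c b (sAff c a x) := by
  have hba : ⟪b.1, a.1⟫ = 0 := by rwa [real_inner_comm]
  rw [sAff_eq_add_smul c b, sAff_add_of_inner_eq_zero c (inner_smul_fst_eq_zero h _),
    sAff_eq_add_smul c b (sAff c a x), aval_sAff_of_inner_eq_zero c hba]

lemma Jop_comp_sAff_of_inner_eq_zero (h : ⟪a.1, b.1⟫ = 0) (f : V → R) (x : V) :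
    Jop c b (fun y => f (sAff c a y)) x = Jop c b f (sAff c a x) := by
  have hba : ⟪b.1, a.1⟫ = 0 := by rwa [real_inner_comm]
  simp only [Jop_eq_jSum, aval_sAff_of_inner_eq_zero c hba,
    sAff_add_of_inner_eq_zero c (inner_zsmul_fst_eq_zero h _)]

lemma Jop_comm_of_inner_eq_zero (h : ⟪a.1, b.1⟫ = 0) (f : V → R) (x : V) :
    Jop c a (Jop c b f) x = Jop c b (Jop c a f) x := by
  have hba : ⟪b.1, a.1⟫ = 0 := by rwa [real_inner_comm]
  simp only [Jop_eq_jSum, aval_add_of_inner_eq_zero c (inner_zsmul_fst_eq_zero h _),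
    aval_add_of_inner_eq_zero c (inner_zsmul_fst_eq_zero hba _)]
  rw [jSum_comm]
  simp only [add_right_comm]

lemma Iop_comm_of_inner_eq_zero (h : ⟪a.1, b.1⟫ = 0) (τ : V × ℤ → R) (f : V → R) (x : V) :
    Iop c τ a (Iop c τ b f) x = Iop c τ b (Iop c τ a f) x := by
  have hba : ⟪b.1, a.1⟫ = 0 := by rwa [real_inner_comm]
  unfold Iop
  simp only [Jop_add_mul]
  rw [Jop_comp_sAff_of_inner_eq_zero c h, Jop_comp_sAff_of_inner_eq_zero c hba,
    sAff_comm_of_inner_eq_zero c h, Jop_comm_of_inner_eq_zero c h]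
  ring

end PerpendicularAffineRoots

open RootSystemData in
theorem statement3_general {V : Type*} [NormedAddCommGroup V] [InnerProductSpace ℝ V]
    (D : RootSystemData V) (cz : ℤ)
    (τ : V × ℤ → ℂ)
    (α β : V) (r l : ℤ)
    (hperp : ⟪α, coroot β⟫ = 0) :
    ∀ f : V → ℂ, ∀ lam ∈ D.weightLattice,
      Iop (cz : ℝ) τ (α, r) (Iop (cz : ℝ) τ (β, l) f) lam
        = Iop (cz : ℝ) τ (β, l) (Iop (cz : ℝ) τ (α, r) f) lam :=
  fun f lam _ => Iop_comm_of_inner_eq_zero _ (inner_coroot_eq_zero_iff.1 hperp) τ f lam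

open RootSystemData in
/-- integral-reflection operators attached to perpendicular affine roots
commute, as operators on functions over the weight lattice `P`. -/
theorem statement3 {V : Type*} [NormedAddCommGroup V] [InnerProductSpace ℝ V]
    (D : RootSystemData V) (cz : ℤ) (hc : 1 < cz)
    (τ : V × ℤ → ℂ) (hτ : D.IsMultiplicity (cz : ℝ) τ)
    (α β : V) (hα : α ∈ D.R0) (hβ : β ∈ D.R0) (r l : ℤ)
    (hperp : ⟪α, coroot β⟫ = 0) :
    ∀ f : V → ℂ, ∀ lam ∈ D.weightLattice,
      Iop (cz : ℝ) τ (α, r) (Iop (cz : ℝ) τ (β, l) f) lam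
        = Iop (cz : ℝ) τ (β, l) (Iop (cz : ℝ) τ (α, r) f) lam :=
  statement3_general D cz τ α β r l hperp
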